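/- Fix $n \in \mathbb{Z}$ nonzero with $\Delta_n(t)=nt^2-(2n+1)t+n$ irreducible over $\mathbb{Q}$, and let $f\colon \mathbb{Z}[t,t^{-1}]/(\Delta_n) \to \mathbb{Z}[1/n,\xi]$ be the isomorphism sending $t$ to $a/n$, where $a = \frac{(2n+1)+\sqrt{4n+1}}{2}$ and $\xi = \frac{1+\sqrt{4n+1}}{2}$. Then $f$ intertwines the involution $p(t) \mapsto p(t^{-1})$ on $\mathbb{Z}[t,t^{-1}]/(\Delta_n)$ with the Galois conjugation $\sqrt{4n+1} \mapsto -\sqrt{4n+1}$ on $\mathbb{Z}[1/n,\xi]$. Consequently $f$ restricts to a group isomorphism between the unitary units $U(\Lambda_n) = \{u \in \Lambda_n^\times : u\bar{u} = 1\}$ and $\{x \in \mathbb{Z}[1/n,\xi]^\times : x\bar{x} = 1\}$. -/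

import Mathlib

/-! A ring map out of `Λₙ = ℤ[t,t⁻¹]/(Δₙ)` is determined by the image of `t`, so it suffices to
compare `f ∘ τ` and `σ ∘ f` on `t`. There `f (τ t) = f(t)⁻¹`, while `σ (f t) = ā/n` is also the
inverse of `f t = a/n`, because `a ā = ((2n+1)² - (4n+1))/4 = n²`. Unitary units correspond since
`f` is a ring isomorphism commuting with the two involutions. -/

open LaurentPolynomial in
/-- `Δₙ = n t² - (2n+1) t + n` as a Laurent polynomial over `ℤ`. -/
noncomputable def DeltaL (n : ℤ) : LaurentPolynomial ℤ :=
  LaurentPolynomial.C n * T 2 - LaurentPolynomial.C (2 * n + 1) * T 1 + LaurentPolynomial.C n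

/-- `Δₙ` as a polynomial over `ℚ` (for the irreducibility hypothesis). -/
noncomputable def DeltaQ (n : ℤ) : Polynomial ℚ :=
  Polynomial.C (n : ℚ) * Polynomial.X ^ 2 - Polynomial.C ((2 * n + 1 : ℤ) : ℚ) * Polynomial.X +
    Polynomial.C (n : ℚ)

/-- The quadratic field `K = ℚ(√(4n+1))`, realized as `ℚ[X]/(X² - (4n+1))`. -/
abbrev K5 (n : ℤ) := AdjoinRoot ((Polynomial.X : Polynomial ℚ) ^ 2 - Polynomial.C ((4 * n + 1 : ℤ) : ℚ))

/-- The square root `s = √(4n+1)` in `K`. -/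
noncomputable abbrev s5 (n : ℤ) : K5 n := AdjoinRoot.root _

/-- `ξ = (1 + √(4n+1))/2`. -/
noncomputable abbrev xi5 (n : ℤ) : K5 n := algebraMap ℚ (K5 n) (1 / 2) * (1 + s5 n)

/-- `a = ((2n+1) + √(4n+1))/2`. -/
noncomputable abbrev a5 (n : ℤ) : K5 n :=
  algebraMap ℚ (K5 n) (1 / 2) * (algebraMap ℚ (K5 n) ((2 * n + 1 : ℤ) : ℚ) + s5 n)

/-- The subring `ℤ[1/n, ξ]` of `K`. -/
noncomputable abbrev R5 (n : ℤ) : Subring (K5 n) :=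
  Subring.closure {algebraMap ℚ (K5 n) ((n : ℚ)⁻¹), xi5 n}

/-- `Λₙ = ℤ[t,t⁻¹]/(Δₙ)`. -/
abbrev Lam (n : ℤ) := LaurentPolynomial ℤ ⧸ Ideal.span {DeltaL n}

open LaurentPolynomial
open scoped Polynomial

theorem LaurentPolynomial.ringHom_ext {R S : Type*} [CommSemiring R] [Semiring S]
    {f g : R[T;T⁻¹] →+* S} (hC : ∀ a, f (C a) = g (C a)) (hT : f (T 1) = g (T 1)) : f = g :=
  IsLocalization.ringHom_ext (Submonoid.powers Polynomial.X) <|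
    Polynomial.ringHom_ext (f := f.comp (algebraMap R[X] R[T;T⁻¹]))
      (g := g.comp (algebraMap R[X] R[T;T⁻¹]))
      (by simpa [algebraMap_eq_toLaurent] using hC)
      (by simpa [algebraMap_eq_toLaurent] using hT)

theorem Lam.ringHom_ext {n : ℤ} {S : Type*} [Semiring S] {f g : Lam n →+* S}
    (h : f (Ideal.Quotient.mk _ (T 1)) = g (Ideal.Quotient.mk _ (T 1))) : f = g :=
  Ideal.Quotient.ringHom_ext <| LaurentPolynomial.ringHom_ext
    (fun a => RingHom.congr_fun (Subsingleton.elim ((f.comp _).comp C) ((g.comp _).comp C)) a) h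

theorem Lam.mk_T_neg_one_mul_mk_T_one (n : ℤ) :
    Ideal.Quotient.mk (Ideal.span {DeltaL n}) (T (-1)) * Ideal.Quotient.mk _ (T 1) = 1 := by
  rw [← map_mul, ← T_add, neg_add_cancel, T_zero, map_one]

theorem s5_sq (n : ℤ) : s5 n ^ 2 = 4 * n + 1 := by
  have := AdjoinRoot.eval₂_root ((Polynomial.X : ℚ[X]) ^ 2 - Polynomial.C ((4 * n + 1 : ℤ) : ℚ))
  rw [Polynomial.eval₂_sub, Polynomial.eval₂_pow, Polynomial.eval₂_X, Polynomial.eval₂_C,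
    sub_eq_zero, map_intCast] at this
  exact_mod_cast this

theorem a5_mul_conj (n : ℤ) (σK : K5 n →+* K5 n) (hσK : σK (s5 n) = - s5 n) :
    a5 n * σK (a5 n) = algebraMap ℚ (K5 n) (n ^ 2) := by
  have half : algebraMap ℚ (K5 n) (1 / 2) * 2 = 1 := by
    rw [← map_ofNat (algebraMap ℚ (K5 n)), ← map_mul]; norm_num
  simp only [a5, map_mul, map_add, σK.map_rat_algebraMap, hσK, map_intCast, map_pow]
  push_cast
  linear_combination (-(algebraMap ℚ (K5 n) (1 / 2)) ^ 2) * s5_sq n +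
    (n : K5 n) ^ 2 * (2 * algebraMap ℚ (K5 n) (1 / 2) + 1) * half

theorem RingEquiv.bijOn_unitary {A B : Type*} [Semiring A] [Semiring B] (f : A ≃+* B)
    {τ : A → A} {σ : B → B} (h : ∀ x, f (τ x) = σ (f x)) :
    Set.BijOn f {u | u * τ u = 1} {x | x * σ x = 1} := by
  have : {u | u * τ u = 1} = f ⁻¹' {x | x * σ x = 1} := by
    ext u
    simp [← h, ← map_mul, map_eq_one_iff f f.injective]
  exact this ▸ f.bijective.bijOn_preimage

theorem intertwines_conj (n : ℤ) (hn : n ≠ 0) (f : Lam n ≃+* R5 n)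
    (hf : ((f (Ideal.Quotient.mk (Ideal.span {DeltaL n}) (T 1)) : K5 n) =
      algebraMap ℚ (K5 n) ((n : ℚ)⁻¹) * a5 n))
    (τ : Lam n →+* Lam n)
    (hτ : τ (Ideal.Quotient.mk (Ideal.span {DeltaL n}) (T 1)) =
      Ideal.Quotient.mk (Ideal.span {DeltaL n}) (T (-1)))
    (σK : K5 n →+* K5 n) (hσK : σK (s5 n) = - s5 n) (x : Lam n) :
    (f (τ x) : K5 n) = σK (f x) := by
  set t := Ideal.Quotient.mk (Ideal.span {DeltaL n}) (T 1)
  let F : Lam n →+* K5 n := (R5 n).subtype.comp f.toRingHom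
  suffices F.comp τ = σK.comp F from RingHom.congr_fun this x
  refine Lam.ringHom_ext (left_inv_eq_right_inv (a := F t) ?_ ?_)
  · rw [RingHom.comp_apply, ← map_mul, hτ, Lam.mk_T_neg_one_mul_mk_T_one, map_one]
  · calc F t * σK (F t)
        = algebraMap ℚ (K5 n) ((n : ℚ)⁻¹ * (n : ℚ)⁻¹ * n ^ 2) := by
          change (f t : K5 n) * σK (f t) = _
          rw [hf, map_mul σK, σK.map_rat_algebraMap, map_mul (algebraMap ℚ (K5 n)),
            map_mul (algebraMap ℚ (K5 n)), ← a5_mul_conj n σK hσK]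
          ring
      _ = 1 := by field_simp; exact map_one _

theorem stmt6_general (n : ℤ) (hn : n ≠ 0)
    (f : Lam n ≃+* R5 n)
    (hf : ((f (Ideal.Quotient.mk (Ideal.span {DeltaL n}) (LaurentPolynomial.T 1)) : K5 n) =
      algebraMap ℚ (K5 n) ((n : ℚ)⁻¹) * a5 n))
    (τ : Lam n →+* Lam n)
    (hτ : τ (Ideal.Quotient.mk (Ideal.span {DeltaL n}) (LaurentPolynomial.T 1)) =
      Ideal.Quotient.mk (Ideal.span {DeltaL n}) (LaurentPolynomial.T (-1)))
    (σK : K5 n →+* K5 n) (hσK : σK (s5 n) = - s5 n)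
    (σ : R5 n →+* R5 n) (hσ : ∀ x : R5 n, ((σ x : K5 n)) = σK (x : K5 n)) :
    (∀ x : Lam n, ((f (τ x) : K5 n)) = σK (f x)) ∧
    Set.BijOn (fun x : Lam n => f x) {u : Lam n | u * τ u = 1}
      {x : R5 n | x * σ x = 1} := by
  have hK := intertwines_conj n hn f hf τ hτ σK hσK
  refine ⟨hK, f.bijOn_unitary fun x => ?_⟩
  rw [Subtype.ext_iff, hσ, hK]

/-- The isomorphism `f : Λₙ ≅ ℤ[1/n,ξ]` sending `t` to `a/n` intertwines
the involution `t ↦ t⁻¹` with Galois conjugation `√(4n+1) ↦ -√(4n+1)`; consequently it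
restricts to a bijection between the unitary units `{u : u·ū = 1}` on the two sides. -/
theorem stmt6 (n : ℤ) (hn : n ≠ 0) (hirr : Irreducible (DeltaQ n))
    (f : Lam n ≃+* R5 n)
    (hf : ((f (Ideal.Quotient.mk (Ideal.span {DeltaL n}) (LaurentPolynomial.T 1)) : K5 n) =
      algebraMap ℚ (K5 n) ((n : ℚ)⁻¹) * a5 n))
    (τ : Lam n →+* Lam n)
    (hτ : τ (Ideal.Quotient.mk (Ideal.span {DeltaL n}) (LaurentPolynomial.T 1)) =
      Ideal.Quotient.mk (Ideal.span {DeltaL n}) (LaurentPolynomial.T (-1)))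
    (σK : K5 n →+* K5 n) (hσK : σK (s5 n) = - s5 n)
    (σ : R5 n →+* R5 n) (hσ : ∀ x : R5 n, ((σ x : K5 n)) = σK (x : K5 n)) :
    (∀ x : Lam n, ((f (τ x) : K5 n)) = σK (f x)) ∧
    Set.BijOn (fun x : Lam n => f x) {u : Lam n | u * τ u = 1}
      {x : R5 n | x * σ x = 1} :=
  stmt6_general n hn f hf τ hτ σK hσK σ hσ
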